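/- arXiv:2112.14999 — 2 statements merged into one kernel-verified Lean document; each statement's English description precedes it below -/
import Mathlib

section
/- Assume Hypotheses (H). Fix s ∈ I, T > s and f ∈ C_b(ℝ^d;ℝ^m), and let M := M_{[s,T]}. If u^P is a classical solution of the Cauchy problem D_t u = 𝒜^P(t)u on (s,T]×ℝ^d with u(s,·) = f which is bounded on [s,T]×ℝ^d, then max_{k=1,…,m} |u^P_k(t,x)| ≤ e^{M(t−s)} max_{k=1,…,m} sup_{ℝ^d}|f_k| for every (t,x) ∈ [s,T]×ℝ^d. -/
open Set Filter Metric MeasureTheory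
open scoped BigOperators Topology

noncomputable section

/-- Euclidean space `ℝ^d`. -/
abbrev Euc (d : ℕ) := EuclideanSpace ℝ (Fin d)

variable {d m : ℕ}

/-- First-order spatial partial derivative. -/
def pd (i : Fin d) (f : Euc d → ℝ) (x : Euc d) : ℝ :=
  fderiv ℝ f x (EuclideanSpace.single i 1)

/-- Second-order spatial partial derivative. -/
def pd2 (i j : Fin d) (f : Euc d → ℝ) (x : Euc d) : ℝ :=
  fderiv ℝ (fun y => pd j f y) x (EuclideanSpace.single i 1)

/-- The weakly coupled elliptic operator `𝒜(t)` with diffusion coefficients `Q`,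
drift coefficients `b` and potential matrix `c`, acting on `ζ : ℝ^d → ℝ^m`. -/
def opA (Q : Fin m → ℝ → Euc d → Fin d → Fin d → ℝ)
    (b : Fin m → ℝ → Euc d → Fin d → ℝ)
    (c : ℝ → Euc d → Fin m → Fin m → ℝ)
    (t : ℝ) (ζ : Euc d → Fin m → ℝ) (x : Euc d) (k : Fin m) : ℝ :=
  (∑ i, ∑ j, Q k t x i j * pd2 i j (fun y => ζ y k) x)
    + (∑ j, b k t x j * pd j (fun y => ζ y k) x)
    + (∑ h, c t x k h * ζ x h)

/-- The matrix `C^P`: diagonal entries of `C`, absolute values off the diagonal. -/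
def CP (c : ℝ → Euc d → Fin m → Fin m → ℝ) :
    ℝ → Euc d → Fin m → Fin m → ℝ :=
  fun t x k h => if k = h then c t x k h else |c t x k h|

/-- Smallest eigenvalue of a (symmetric) matrix, via the Rayleigh quotient. -/
def minEig (A : Fin d → Fin d → ℝ) : ℝ :=
  sInf {r : ℝ | ∃ ξ : Euc d, ‖ξ‖ = 1 ∧ r = ∑ i, ∑ j, A i j * ξ i * ξ j}

/-- Local parabolic `(α/2, α)`-Hölder continuity on `I × ℝ^d`. -/
def LocParHolder {F : Type*} [NormedAddCommGroup F] (α : ℝ) (I : Set ℝ)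
    (f : ℝ → Euc d → F) : Prop :=
  ∀ K : Set (ℝ × Euc d), K ⊆ I ×ˢ (univ : Set (Euc d)) → IsCompact K →
    ∃ L : ℝ, ∀ p ∈ K, ∀ q ∈ K,
      ‖f p.1 p.2 - f q.1 q.2‖ ≤ L * (|p.1 - q.1| ^ (α / 2) + ‖p.2 - q.2‖ ^ α)

/-- `I` is a right half-line (possibly all of `ℝ`). -/
def IsRightHalfline (I : Set ℝ) : Prop := (∃ a, I = Ici a) ∨ I = univ

/-- Hypotheses (H). -/
structure Hyp (I : Set ℝ)
    (Q : Fin m → ℝ → Euc d → Fin d → Fin d → ℝ)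
    (b : Fin m → ℝ → Euc d → Fin d → ℝ)
    (c : ℝ → Euc d → Fin m → Fin m → ℝ) : Prop where
  symm : ∀ k t x i j, Q k t x i j = Q k t x j i
  holder : ∃ α ∈ Ioo (0:ℝ) 1,
      (∀ k i j, LocParHolder α I (fun t x => Q k t x i j)) ∧
      (∀ k j, LocParHolder α I (fun t x => b k t x j)) ∧
      (∀ k h, LocParHolder α I (fun t x => c t x k h))
  ellipt : ∀ J : Set ℝ, J ⊆ I → Bornology.IsBounded J →
      ∀ k, ∃ μ0 > 0, ∀ t ∈ J, ∀ x : Euc d, μ0 ≤ minEig (Q k t x)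
  lyap : ∀ J : Set ℝ, J ⊆ I → Bornology.IsBounded J →
      ∃ φ : Euc d → Fin m → ℝ, ∃ lam > 0,
        (∀ k, ContDiff ℝ 2 (fun x => φ x k)) ∧
        (∀ x k, 0 < φ x k) ∧
        (∀ k, Tendsto (fun x => φ x k) (cocompact (Euc d)) atTop) ∧
        (∀ t ∈ J, ∀ x k, opA Q b (CP c) t φ x k ≤ lam * φ x k)
  irred : ¬ ∃ K : Set (Fin m), K.Nonempty ∧ K ≠ univ ∧
      ∀ i ∈ K, ∀ j ∉ K, ∀ t ∈ I, ∀ x : Euc d, c t x i j = 0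
  rowBdd : ∀ J : Set ℝ, J ⊆ I → Bornology.IsBounded J →
      ∃ M : ℝ, ∀ t ∈ J, ∀ x : Euc d, ∀ k, (∑ j, CP c t x k j) ≤ M

/-- `f` is bounded and continuous (membership in `C_b(ℝ^d; ℝ^m)`). -/
def IsBddContinuous (f : Euc d → Fin m → ℝ) : Prop :=
  Continuous f ∧ ∃ F, ∀ x k, |f x k| ≤ F

/-- Classical solution of the Cauchy problem for the operator with coefficients
`Q, b, c`, datum `f` at time `s`. -/
def ClassicalSol (Q : Fin m → ℝ → Euc d → Fin d → Fin d → ℝ)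
    (b : Fin m → ℝ → Euc d → Fin d → ℝ)
    (c : ℝ → Euc d → Fin m → Fin m → ℝ)
    (s : ℝ) (f : Euc d → Fin m → ℝ) (u : ℝ → Euc d → Fin m → ℝ) : Prop :=
  ContinuousOn (fun p : ℝ × Euc d => u p.1 p.2) (Ici s ×ˢ (univ : Set (Euc d))) ∧
  (∀ x, u s x = f x) ∧
  (∀ t ∈ Ioi s, ∀ k, ContDiff ℝ 2 (fun x => u t x k)) ∧
  (∀ t ∈ Ioi s, ∀ x k, HasDerivAt (fun r => u r x k) (opA Q b c t (u t) x k) t)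

/-- Bounded on every strip `[s,T] × ℝ^d`. -/
def BddOnStrips (s : ℝ) (u : ℝ → Euc d → Fin m → ℝ) : Prop :=
  ∀ T > s, ∃ K, ∀ t ∈ Icc s T, ∀ x k, |u t x k| ≤ K

/-- Classical solution of the Cauchy problem on `(s,T] × ℝ^d`. -/
def ClassicalSolOn (Q : Fin m → ℝ → Euc d → Fin d → Fin d → ℝ)
    (b : Fin m → ℝ → Euc d → Fin d → ℝ)
    (c : ℝ → Euc d → Fin m → Fin m → ℝ)
    (s T : ℝ) (f : Euc d → Fin m → ℝ) (u : ℝ → Euc d → Fin m → ℝ) : Prop :=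
  ContinuousOn (fun p : ℝ × Euc d => u p.1 p.2) (Icc s T ×ˢ (univ : Set (Euc d))) ∧
  (∀ x, u s x = f x) ∧
  (∀ t ∈ Ioc s T, ∀ k, ContDiff ℝ 2 (fun x => u t x k)) ∧
  (∀ t ∈ Ioc s T, ∀ x k, HasDerivAt (fun r => u r x k) (opA Q b c t (u t) x k) t)

/-! Weight `u` by `e^{-M(t-s)}` and subtract the penalty `ε e^{ν(t-s)} φ`, where `φ` is the
Lyapunov function of (H)(iii) and `ν > λ - M`. Since `φ → ∞`, the penalized function attains its
maximum over `[s,T] × ℝ^d × {1,…,m}`. If that maximum were nonnegative and above `sup f`, it would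
sit at some `t₀ > s`; there the gradient vanishes, the Hessian pairs nonpositively with the
elliptic `Q`, and, the off-diagonal entries of `C^P` being nonnegative, the coupling term is at
most `M` times the maximum. The equation then makes the time derivative negative, contradicting
maximality in `t`. Letting `ε → 0` bounds `u`; the same argument applied to `-u` bounds `|u|`. -/

theorem nonpos_of_hasDerivAt_deriv_of_forall_le {f f' : ℝ → ℝ} {a x₀ : ℝ}
    (hf : ∀ x, HasDerivAt f (f' x) x) (hf' : HasDerivAt f' a x₀) (hmax : ∀ x, f x ≤ f x₀) :
    a ≤ 0 := by
  by_contra! ha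
  have hf'x₀ : f' x₀ = 0 := IsLocalMax.hasDerivAt_eq_zero (.of_forall hmax) (hf x₀)
  have hpos : ∀ᶠ x in 𝓝[>] x₀, 0 < f' x := by
    have hslope := (hasDerivAt_iff_tendsto_slope.mp hf').mono_left (nhdsGT_le_nhdsNE x₀)
    filter_upwards [hslope.eventually (eventually_gt_nhds ha), self_mem_nhdsWithin] with x hx hx'
    exact pos_of_slope_pos hx' hx hf'x₀
  obtain ⟨b, hb, hIoo⟩ := mem_nhdsGT_iff_exists_Ioo_subset.mp hpos
  have hmono : StrictMonoOn f (Icc x₀ b) :=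
    strictMonoOn_of_deriv_pos (convex_Icc x₀ b)
      (fun x _ => (hf x).continuousAt.continuousWithinAt) fun x hx => by
        rw [interior_Icc] at hx
        rw [(hf x).deriv]
        exact hIoo hx
  exact (hmax b).not_gt (hmono (left_mem_Icc.2 hb.le) (right_mem_Icc.2 hb.le) hb)

theorem nonneg_of_hasDerivAt_of_forall_Ioo_le {f : ℝ → ℝ} {a s t₀ : ℝ} (hst : s < t₀)
    (hf : HasDerivAt f a t₀) (hmax : ∀ t ∈ Ioo s t₀, f t ≤ f t₀) : 0 ≤ a := by
  refine ge_of_tendsto ((hasDerivAt_iff_tendsto_slope.mp hf).mono_left (nhdsLT_le_nhdsNE t₀)) ?_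
  filter_upwards [Ioo_mem_nhdsLT hst] with t ht
  rw [slope_def_field]
  exact div_nonneg_of_nonpos (sub_nonpos.2 (hmax t ht)) (sub_nonpos.2 ht.2.le)

theorem fderiv_fderiv_apply_self_nonpos_of_forall_le {E : Type*} [NormedAddCommGroup E]
    [NormedSpace ℝ E] {ψ : E → ℝ} (hψ : ContDiff ℝ 2 ψ) {x₀ : E} (hmax : ∀ x, ψ x ≤ ψ x₀)
    (w : E) : fderiv ℝ (fderiv ℝ ψ) x₀ w w ≤ 0 := by
  have hψ₁ : Differentiable ℝ ψ := hψ.differentiable (by norm_num)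
  have hψ₂ : Differentiable ℝ (fderiv ℝ ψ) :=
    (hψ.fderiv_right (m := 1) le_rfl).differentiable one_ne_zero
  have hline : ∀ r : ℝ, HasDerivAt (fun r : ℝ => x₀ + r • w) w r := fun r => by
    simpa using ((hasDerivAt_id r).smul_const w).const_add x₀
  refine nonpos_of_hasDerivAt_deriv_of_forall_le (f := fun r => ψ (x₀ + r • w)) (x₀ := 0)
    (fun r => (hψ₁ _).hasFDerivAt.comp_hasDerivAt r (hline r)) ?_ fun r => by simpa using hmax _
  simpa using ((hψ₂ _).hasFDerivAt.comp_hasDerivAt 0 (hline 0)).clm_apply (hasDerivAt_const 0 w)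

theorem exists_forall_le_of_forall_notMem_le {X ι : Type*} [TopologicalSpace X] [Finite ι]
    {S C : Set X} (hS : IsClosed S) (hC : IsCompact C) {g : X → ι → ℝ}
    (hg : ∀ k, ContinuousOn (g · k) S) {p₁ : X} (hp₁ : p₁ ∈ S) (k₁ : ι)
    (hout : ∀ p ∈ S, p ∉ C → ∀ k, g p k ≤ g p₁ k₁) :
    ∃ p₀ ∈ S, ∃ k₀, ∀ p ∈ S, ∀ k, g p k ≤ g p₀ k₀ := by
  let : TopologicalSpace ι := ⊥
  have : DiscreteTopology ι := ⟨rfl⟩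
  obtain ⟨⟨k₀, p₀⟩, ⟨-, hp₀⟩, hmax⟩ := ContinuousOn.exists_isMaxOn' (s := univ ×ˢ S)
    (f := fun q : ι × X => g q.2 q.1)
    (continuousOn_prod_of_discrete_left.2 fun k => by simpa using hg k)
    (isClosed_univ.prod hS) (x₀ := (k₁, p₁)) ⟨trivial, hp₁⟩ <| by
      refine mem_inf_of_inter (isCompact_univ.prod hC).compl_mem_cocompact
        (mem_principal_self _) ?_
      rintro ⟨k, p⟩ ⟨hpC, -, hp⟩
      exact hout p hp (fun h => hpC ⟨trivial, h⟩) k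
  exact ⟨p₀, hp₀, k₀, fun p hp k => isMaxOn_iff.1 hmax (k, p) ⟨trivial, hp⟩⟩

theorem sum_mul_le_sum_mul_of_forall_le {ι : Type*} [Fintype ι] {p w : ι → ℝ} {k : ι}
    (hp : ∀ h ≠ k, 0 ≤ p h) (hw : ∀ h, w h ≤ w k) : ∑ h, p h * w h ≤ (∑ h, p h) * w k := by
  rw [Finset.sum_mul]
  refine Finset.sum_le_sum fun h _ => ?_
  rcases eq_or_ne h k with rfl | hh
  · rfl
  · exact mul_le_mul_of_nonneg_left (hw h) (hp h hh)

theorem posSemidef_of_minEig_nonneg {A : Fin d → Fin d → ℝ} (hA : ∀ i j, A i j = A j i)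
    (h : 0 ≤ minEig A) : (Matrix.of A).PosSemidef := by
  set q : Euc d → ℝ := fun ξ => ∑ i, ∑ j, A i j * ξ i * ξ j
  have hbdd : BddBelow {r : ℝ | ∃ ξ : Euc d, ‖ξ‖ = 1 ∧ r = q ξ} := by
    refine ((isCompact_sphere (0 : Euc d) 1).bddBelow_image
      (f := q) (Continuous.continuousOn (by fun_prop))).mono ?_
    rintro r ⟨ξ, hξ, rfl⟩
    exact ⟨ξ, by simpa using hξ, rfl⟩
  have hq : ∀ v, 0 ≤ q v := by
    intro v
    rcases eq_or_ne v 0 with rfl | hv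
    · simp [q]
    have hunit : 0 ≤ q (‖v‖⁻¹ • v) :=
      h.trans (csInf_le hbdd ⟨_, norm_smul_inv_norm hv, rfl⟩)
    have hhom : q (‖v‖⁻¹ • v) = ‖v‖⁻¹ ^ 2 * q v := by
      simp only [q, PiLp.smul_apply, smul_eq_mul, Finset.mul_sum]
      exact Finset.sum_congr rfl fun i _ => Finset.sum_congr rfl fun j _ => by ring
    rw [hhom] at hunit
    exact nonneg_of_mul_nonneg_right hunit (by positivity)
  refine .of_dotProduct_mulVec_nonneg (Matrix.IsHermitian.ext fun i j => by simp [hA])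
    fun v => (hq (WithLp.toLp 2 v)).trans_eq ?_
  simp only [dotProduct, Pi.star_apply, star_trivial, Matrix.mulVec, Matrix.of_apply,
    Finset.mul_sum, q]
  exact Finset.sum_congr rfl fun i _ => Finset.sum_congr rfl fun j _ => by ring

theorem pd2_eq_fderiv_fderiv {g : Euc d → ℝ} (hg : ContDiff ℝ 2 g) (i j : Fin d) (x : Euc d) :
    pd2 i j g x
      = fderiv ℝ (fderiv ℝ g) x (EuclideanSpace.single i 1) (EuclideanSpace.single j 1) := by
  have hg₂ : Differentiable ℝ (fderiv ℝ g) :=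
    (hg.fderiv_right (m := 1) le_rfl).differentiable one_ne_zero
  unfold pd2 pd
  rw [fderiv_clm_apply (hg₂ x) (differentiableAt_const _)]
  simp

theorem fderiv_fderiv_apply_eq_sum {g : Euc d → ℝ} (x v : Euc d) :
    fderiv ℝ (fderiv ℝ g) x v v = ∑ i, ∑ j, v i * v j *
      fderiv ℝ (fderiv ℝ g) x (EuclideanSpace.single i 1) (EuclideanSpace.single j 1) := by
  conv_lhs => rw [← (EuclideanSpace.basisFun (Fin d) ℝ).sum_repr v]
  simp only [EuclideanSpace.basisFun_repr, EuclideanSpace.basisFun_apply, map_sum, map_smul,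
    sum_apply, smul_apply, smul_eq_mul, Finset.mul_sum]
  rw [Finset.sum_comm]
  exact Finset.sum_congr rfl fun i _ => Finset.sum_congr rfl fun j _ => by ring

theorem posSemidef_neg_pd2_of_forall_le {ψ : Euc d → ℝ} (hψ : ContDiff ℝ 2 ψ) {x₀ : Euc d}
    (hmax : ∀ x, ψ x ≤ ψ x₀) : (-Matrix.of fun i j => pd2 i j ψ x₀).PosSemidef := by
  have hsymm := (hψ.contDiffAt (x := x₀)).isSymmSndFDerivAt (by simp)
  refine .of_dotProduct_mulVec_nonneg ?_ fun v => ?_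
  · refine Matrix.IsHermitian.neg (Matrix.IsHermitian.ext fun i j => ?_)
    simp [pd2_eq_fderiv_fderiv hψ, hsymm _ _]
  · have := fderiv_fderiv_apply_self_nonpos_of_forall_le hψ hmax (WithLp.toLp 2 v)
    rw [fderiv_fderiv_apply_eq_sum] at this
    simp only [dotProduct, Pi.star_apply, star_trivial, Matrix.mulVec, pd2_eq_fderiv_fderiv hψ,
      Matrix.neg_apply, Matrix.of_apply, neg_mul, Finset.sum_neg_distrib, mul_neg, Finset.mul_sum,
      Left.nonneg_neg_iff] at this ⊢
    exact (Finset.sum_congr rfl fun i _ => Finset.sum_congr rfl fun j _ => by ring).trans_le this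

theorem sum_mul_pd2_nonpos_of_forall_le {A : Fin d → Fin d → ℝ} (hA : (Matrix.of A).PosSemidef)
    {ψ : Euc d → ℝ} (hψ : ContDiff ℝ 2 ψ) {x₀ : Euc d} (hmax : ∀ x, ψ x ≤ ψ x₀) :
    ∑ i, ∑ j, A i j * pd2 i j ψ x₀ ≤ 0 := by
  have := (hA.hadamard (posSemidef_neg_pd2_of_forall_le hψ hmax)).dotProduct_mulVec_nonneg 1
  simpa only [dotProduct, Pi.star_apply, Pi.one_apply, star_trivial, Matrix.mulVec,
    Matrix.hadamard, Matrix.of_apply, Matrix.neg_apply, mul_neg, mul_one, Finset.sum_neg_distrib,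
    one_mul, Left.nonneg_neg_iff] using this

theorem pd_eq_zero_of_forall_le {ψ : Euc d → ℝ} {x₀ : Euc d} (hmax : ∀ x, ψ x ≤ ψ x₀)
    (j : Fin d) : pd j ψ x₀ = 0 := by
  simp [pd, IsLocalMax.fderiv_eq_zero (.of_forall hmax)]

theorem pd_mul_sub_mul {U V : Euc d → ℝ} {x : Euc d} (hU : DifferentiableAt ℝ U x)
    (hV : DifferentiableAt ℝ V x) (A B : ℝ) (j : Fin d) :
    pd j (fun y => A * U y - B * V y) x = A * pd j U x - B * pd j V x := by
  simp [pd, fderiv_fun_sub (hU.const_mul A) (hV.const_mul B), fderiv_const_mul hU,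
    fderiv_const_mul hV]

theorem differentiable_pd {U : Euc d → ℝ} (hU : ContDiff ℝ 2 U) (j : Fin d) :
    Differentiable ℝ (pd j U) :=
  ((hU.fderiv_right (m := 1) le_rfl).differentiable one_ne_zero).clm_apply
    (differentiable_const _)

theorem pd2_mul_sub_mul {U V : Euc d → ℝ} (hU : ContDiff ℝ 2 U) (hV : ContDiff ℝ 2 V)
    (A B : ℝ) (i j : Fin d) (x : Euc d) :
    pd2 i j (fun y => A * U y - B * V y) x = A * pd2 i j U x - B * pd2 i j V x := by
  have hpd : (fun y => pd j (fun y => A * U y - B * V y) y)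
      = fun y => A * pd j U y - B * pd j V y :=
    funext fun y => pd_mul_sub_mul (hU.differentiable (by norm_num) y)
      (hV.differentiable (by norm_num) y) A B j
  rw [pd2, hpd]
  exact pd_mul_sub_mul (differentiable_pd hU j x) (differentiable_pd hV j x) A B i

theorem pd_neg (g : Euc d → ℝ) (j : Fin d) (x : Euc d) :
    pd j (fun y => -g y) x = -pd j g x := by
  simp [pd]

theorem pd2_neg (g : Euc d → ℝ) (i j : Fin d) (x : Euc d) :
    pd2 i j (fun y => -g y) x = -pd2 i j g x := by
  simp [pd2, pd_neg]

section Operator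

variable {Q : Fin m → ℝ → Euc d → Fin d → Fin d → ℝ} {b : Fin m → ℝ → Euc d → Fin d → ℝ}
  {c : ℝ → Euc d → Fin m → Fin m → ℝ} {t : ℝ}

theorem opA_mul_sub_mul {ζ η : Euc d → Fin m → ℝ} {k : Fin m}
    (hζ : ContDiff ℝ 2 fun x => ζ x k) (hη : ContDiff ℝ 2 fun x => η x k) (A B : ℝ)
    (x : Euc d) :
    opA Q b c t (fun y h => A * ζ y h - B * η y h) x k
      = A * opA Q b c t ζ x k - B * opA Q b c t η x k := by
  simp only [opA, pd2_mul_sub_mul hζ hη, pd_mul_sub_mul (hζ.differentiable (by norm_num) x)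
    (hη.differentiable (by norm_num) x), mul_sub, mul_add, Finset.sum_sub_distrib,
    Finset.mul_sum, mul_left_comm _ A, mul_left_comm _ B]
  ring

theorem opA_neg (ζ : Euc d → Fin m → ℝ) (x : Euc d) (k : Fin m) :
    opA Q b c t (-ζ) x k = -opA Q b c t ζ x k := by
  simp only [opA, Pi.neg_apply, pd2_neg, pd_neg, mul_neg, Finset.sum_neg_distrib]
  ring

theorem opA_le_of_forall_le {w : Euc d → Fin m → ℝ} {x₀ : Euc d} {k₀ : Fin m}
    (hw : ContDiff ℝ 2 fun x => w x k₀) (hQ : (Matrix.of (Q k₀ t x₀)).PosSemidef)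
    (hc : ∀ h ≠ k₀, 0 ≤ c t x₀ k₀ h) (hmax : ∀ x h, w x h ≤ w x₀ k₀) :
    opA Q b c t w x₀ k₀ ≤ (∑ h, c t x₀ k₀ h) * w x₀ k₀ := by
  have hdiff := sum_mul_pd2_nonpos_of_forall_le hQ hw fun x => hmax x k₀
  have hdrift : ∑ j, b k₀ t x₀ j * pd j (fun x => w x k₀) x₀ = 0 := by
    simp [pd_eq_zero_of_forall_le fun x => hmax x k₀]
  have hcoupling := sum_mul_le_sum_mul_of_forall_le hc (hmax x₀)
  rw [opA]
  linarith

theorem ClassicalSolOn.neg {s T : ℝ} {f : Euc d → Fin m → ℝ} {u : ℝ → Euc d → Fin m → ℝ}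
    (hu : ClassicalSolOn Q b c s T f u) : ClassicalSolOn Q b c s T (-f) (-u) := by
  obtain ⟨hcont, hinit, hreg, hderiv⟩ := hu
  refine ⟨hcont.neg, fun x => by simp [hinit], fun t ht k => (hreg t ht k).neg,
    fun t ht x k => ?_⟩
  rw [Pi.neg_apply, opA_neg]
  exact (hderiv t ht x k).neg

end Operator

structure IsLyapunovFn (Q : Fin m → ℝ → Euc d → Fin d → Fin d → ℝ)
    (b : Fin m → ℝ → Euc d → Fin d → ℝ) (c : ℝ → Euc d → Fin m → Fin m → ℝ) (J : Set ℝ)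
    (φ : Euc d → Fin m → ℝ) (lam : ℝ) : Prop where
  contDiff : ∀ k, ContDiff ℝ 2 fun x => φ x k
  pos : ∀ x k, 0 < φ x k
  tendsto : ∀ k, Tendsto (fun x => φ x k) (cocompact (Euc d)) atTop
  opA_le : ∀ t ∈ J, ∀ x k, opA Q b c t φ x k ≤ lam * φ x k

def penalized (s M ν ε : ℝ) (u : ℝ → Euc d → Fin m → ℝ) (φ : Euc d → Fin m → ℝ) (t : ℝ)
    (x : Euc d) (k : Fin m) : ℝ :=
  Real.exp (-(M * (t - s))) * u t x k - ε * Real.exp (ν * (t - s)) * φ x k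

section MaximumPrinciple

variable {Q : Fin m → ℝ → Euc d → Fin d → Fin d → ℝ} {b : Fin m → ℝ → Euc d → Fin d → ℝ}
  {P : ℝ → Euc d → Fin m → Fin m → ℝ} {J : Set ℝ} {s T M ν ε lam K F : ℝ}
  {f : Euc d → Fin m → ℝ} {u : ℝ → Euc d → Fin m → ℝ} {φ : Euc d → Fin m → ℝ}

theorem exp_neg_mul_mul_le (huK : ∀ t ∈ Icc s T, ∀ x k, u t x k ≤ K) {t : ℝ}
    (ht : t ∈ Icc s T) (x : Euc d) (k : Fin m) :
    Real.exp (-(M * (t - s))) * u t x k ≤ Real.exp (|M| * (T - s)) * |K| := by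
  have hexp : Real.exp (-(M * (t - s))) ≤ Real.exp (|M| * (T - s)) := by
    gcongr
    nlinarith [neg_abs_le M, abs_nonneg M, ht.1, ht.2]
  calc Real.exp (-(M * (t - s))) * u t x k ≤ Real.exp (-(M * (t - s))) * |K| :=
        mul_le_mul_of_nonneg_left ((huK t ht x k).trans (le_abs_self K)) (Real.exp_pos _).le
    _ ≤ Real.exp (|M| * (T - s)) * |K| := mul_le_mul_of_nonneg_right hexp (abs_nonneg K)

theorem exists_forall_penalized_le
    (hcont : ContinuousOn (fun p : ℝ × Euc d => u p.1 p.2) (Icc s T ×ˢ (univ : Set (Euc d))))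
    (huK : ∀ t ∈ Icc s T, ∀ x k, u t x k ≤ K) (hφ : IsLyapunovFn Q b P J φ lam) (hν : 0 ≤ ν)
    (hε : 0 < ε) {t₁ : ℝ} (ht₁ : t₁ ∈ Icc s T) (x₁ : Euc d) (k₁ : Fin m) :
    ∃ t₀ ∈ Icc s T, ∃ x₀ k₀, ∀ t ∈ Icc s T, ∀ x k,
      penalized s M ν ε u φ t x k ≤ penalized s M ν ε u φ t₀ x₀ k₀ := by
  set C₀ := Real.exp (|M| * (T - s)) * |K|
  set R := (C₀ - penalized s M ν ε u φ t₁ x₁ k₁) / ε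
  obtain ⟨C, hC, hCout⟩ : ∃ C : Set (Euc d), IsCompact C ∧ ∀ x ∉ C, ∀ k, R ≤ φ x k := by
    obtain ⟨C, hC, hsub⟩ := mem_cocompact.1
      (eventually_all.2 fun k => (hφ.tendsto k).eventually_ge_atTop R)
    exact ⟨C, hC, fun x hx => hsub hx⟩
  have hg : ∀ k, ContinuousOn (fun p : ℝ × Euc d => penalized s M ν ε u φ p.1 p.2 k)
      (Icc s T ×ˢ univ) := fun k =>
    ((Continuous.continuousOn (by fun_prop)).mul
      ((continuous_apply k).comp_continuousOn hcont)).sub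
      (Continuous.continuousOn (by have := (hφ.contDiff k).continuous; fun_prop))
  obtain ⟨⟨t₀, x₀⟩, ⟨ht₀, -⟩, k₀, hmax⟩ := exists_forall_le_of_forall_notMem_le
    (isClosed_Icc.prod isClosed_univ) (isCompact_Icc.prod hC) hg (p₁ := (t₁, x₁))
    ⟨ht₁, trivial⟩ k₁ <| by
      rintro ⟨t, x⟩ ⟨ht, -⟩ hxC k
      have hR : C₀ - penalized s M ν ε u φ t₁ x₁ k₁ ≤ ε * φ x k :=
        (div_le_iff₀' hε).1 (hCout x (fun hx => hxC ⟨ht, hx⟩) k)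
      have hpen : ε * φ x k ≤ ε * Real.exp (ν * (t - s)) * φ x k := by
        refine mul_le_mul_of_nonneg_right (le_mul_of_one_le_right hε.le ?_) (hφ.pos x k).le
        exact Real.one_le_exp (mul_nonneg hν (sub_nonneg.2 ht.1))
      have := exp_neg_mul_mul_le (M := M) huK ht x k
      simp only [penalized] at hR hpen this ⊢
      linarith
  exact ⟨t₀, ht₀, x₀, k₀, fun t ht x k => hmax (t, x) ⟨ht, trivial⟩ k⟩

theorem penalized_neg_of_forall_le (hu : ClassicalSolOn Q b P s T f u)
    (hQ : ∀ t ∈ Ioc s T, ∀ x k, (Matrix.of (Q k t x)).PosSemidef)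
    (hP : ∀ t ∈ Ioc s T, ∀ x k h, h ≠ k → 0 ≤ P t x k h)
    (hM : ∀ t ∈ Ioc s T, ∀ x k, ∑ h, P t x k h ≤ M) (hφ : IsLyapunovFn Q b P (Ioc s T) φ lam)
    (hν : lam - M < ν) (hε : 0 < ε) {t₀ : ℝ} (ht₀ : t₀ ∈ Ioc s T) {x₀ : Euc d} {k₀ : Fin m}
    (hmax : ∀ t ∈ Icc s T, ∀ x k,
      penalized s M ν ε u φ t x k ≤ penalized s M ν ε u φ t₀ x₀ k₀) :
    penalized s M ν ε u φ t₀ x₀ k₀ < 0 := by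
  by_contra! hV
  obtain ⟨-, -, hreg, hderiv⟩ := hu
  set A := Real.exp (-(M * (t₀ - s)))
  set B := ε * Real.exp (ν * (t₀ - s))
  have hspace : opA Q b P t₀ (fun y h => A * u t₀ y h - B * φ y h) x₀ k₀
      ≤ M * penalized s M ν ε u φ t₀ x₀ k₀ :=
    (opA_le_of_forall_le ((hreg t₀ ht₀ k₀).const_smul A |>.sub ((hφ.contDiff k₀).const_smul B))
      (hQ t₀ ht₀ x₀ k₀) (fun h hh => hP t₀ ht₀ x₀ k₀ h hh)
      fun x h => hmax t₀ (Ioc_subset_Icc_self ht₀) x h).trans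
      (mul_le_mul_of_nonneg_right (hM t₀ ht₀ x₀ k₀) hV)
  rw [opA_mul_sub_mul (hreg t₀ ht₀ k₀) (hφ.contDiff k₀)] at hspace
  have htime : HasDerivAt (fun t => penalized s M ν ε u φ t x₀ k₀)
      (A * opA Q b P t₀ (u t₀) x₀ k₀ - M * A * u t₀ x₀ k₀ - ν * B * φ x₀ k₀) t₀ := by
    have hA : HasDerivAt (fun t => Real.exp (-(M * (t - s)))) (A * -M) t₀ := by
      simpa using (((hasDerivAt_id t₀).sub_const s).const_mul M).neg.exp
    have hB : HasDerivAt (fun t => ε * Real.exp (ν * (t - s)))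
        (ε * (Real.exp (ν * (t₀ - s)) * ν)) t₀ := by
      simpa using ((((hasDerivAt_id t₀).sub_const s).const_mul ν).exp).const_mul ε
    exact ((hA.fun_mul (hderiv t₀ ht₀ x₀ k₀)).fun_sub (hB.mul_const (φ x₀ k₀))).congr_deriv
      (by ring)
  have hnonneg := nonneg_of_hasDerivAt_of_forall_Ioo_le ht₀.1 htime fun t ht =>
    hmax t ⟨ht.1.le, ht.2.le.trans ht₀.2⟩ x₀ k₀
  have hlyap := mul_le_mul_of_nonneg_left (hφ.opA_le t₀ ht₀ x₀ k₀) (by positivity : 0 ≤ B)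
  have hgap : 0 < B * φ x₀ k₀ * (ν - (lam - M)) := by
    have := hφ.pos x₀ k₀
    have := sub_pos.2 hν
    positivity
  simp only [penalized] at hspace hV
  nlinarith

theorem penalized_le (hu : ClassicalSolOn Q b P s T f u)
    (huK : ∀ t ∈ Icc s T, ∀ x k, u t x k ≤ K)
    (hQ : ∀ t ∈ Ioc s T, ∀ x k, (Matrix.of (Q k t x)).PosSemidef)
    (hP : ∀ t ∈ Ioc s T, ∀ x k h, h ≠ k → 0 ≤ P t x k h)
    (hM : ∀ t ∈ Ioc s T, ∀ x k, ∑ h, P t x k h ≤ M) (hφ : IsLyapunovFn Q b P (Ioc s T) φ lam)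
    (hν₀ : 0 ≤ ν) (hν : lam - M < ν) (hε : 0 < ε) (hf : ∀ x k, f x k ≤ F) (hF : 0 ≤ F) :
    ∀ t ∈ Icc s T, ∀ x k, penalized s M ν ε u φ t x k ≤ F := by
  intro t₁ ht₁ x₁ k₁
  by_contra! h₁
  obtain ⟨t₀, ht₀, x₀, k₀, hmax⟩ := exists_forall_penalized_le hu.1 huK hφ hν₀ hε ht₁ x₁ k₁
  have hV : F < penalized s M ν ε u φ t₀ x₀ k₀ := h₁.trans_le (hmax t₁ ht₁ x₁ k₁)
  have hs : s < t₀ := by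
    refine ht₀.1.lt_of_ne fun hst => hV.not_ge ?_
    subst hst
    have := mul_pos hε (hφ.pos x₀ k₀)
    simp only [penalized, sub_self, mul_zero, neg_zero, Real.exp_zero, one_mul, mul_one, hu.2.1]
    linarith [hf x₀ k₀]
  exact (penalized_neg_of_forall_le hu hQ hP hM hφ hν hε ⟨hs, ht₀.2⟩ hmax).not_ge
    (hF.trans hV.le)

theorem ClassicalSolOn.le_exp_mul (hu : ClassicalSolOn Q b P s T f u)
    (huK : ∀ t ∈ Icc s T, ∀ x k, u t x k ≤ K)
    (hQ : ∀ t ∈ Ioc s T, ∀ x k, (Matrix.of (Q k t x)).PosSemidef)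
    (hP : ∀ t ∈ Ioc s T, ∀ x k h, h ≠ k → 0 ≤ P t x k h)
    (hM : ∀ t ∈ Ioc s T, ∀ x k, ∑ h, P t x k h ≤ M) (hφ : IsLyapunovFn Q b P (Ioc s T) φ lam)
    (hf : ∀ x k, f x k ≤ F) (hF : 0 ≤ F) :
    ∀ t ∈ Icc s T, ∀ x k, u t x k ≤ Real.exp (M * (t - s)) * F := by
  intro t ht x k
  set ν := |lam - M| + 1
  set c := Real.exp (ν * (t - s)) * φ x k
  have hc : 0 < c := mul_pos (Real.exp_pos _) (hφ.pos x k)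
  have hweighted : Real.exp (-(M * (t - s))) * u t x k ≤ F := by
    refine le_of_forall_pos_le_add fun δ hδ => ?_
    have := penalized_le (ν := ν) hu huK hQ hP hM hφ (by positivity)
      (by linarith [le_abs_self (lam - M)]) (div_pos hδ hc) hf hF t ht x k
    rw [penalized, mul_assoc, div_mul_cancel₀ _ hc.ne'] at this
    linarith
  calc u t x k = Real.exp (M * (t - s)) * (Real.exp (-(M * (t - s))) * u t x k) := by
        rw [← mul_assoc, ← Real.exp_add, add_neg_cancel, Real.exp_zero, one_mul]
    _ ≤ Real.exp (M * (t - s)) * F := mul_le_mul_of_nonneg_left hweighted (Real.exp_pos _).le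

end MaximumPrinciple

theorem statement_1_general {d m : ℕ}
    (I : Set ℝ) (hI : IsRightHalfline I)
    (Q : Fin m → ℝ → Euc d → Fin d → Fin d → ℝ)
    (b : Fin m → ℝ → Euc d → Fin d → ℝ)
    (c : ℝ → Euc d → Fin m → Fin m → ℝ)
    (hH : Hyp I Q b c)
    (s T : ℝ) (hs : s ∈ I)
    (f : Euc d → Fin m → ℝ)
    (uP : ℝ → Euc d → Fin m → ℝ)
    (huP : ClassicalSolOn Q b (CP c) s T f uP)
    (hbd : ∃ K, ∀ t ∈ Icc s T, ∀ x : Euc d, ∀ k, |uP t x k| ≤ K)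
    (M : ℝ) (hM : ∀ t ∈ Icc s T, ∀ x : Euc d, ∀ k, (∑ j, CP c t x k j) ≤ M)
    (F : ℝ) (hF : ∀ (x : Euc d) k, |f x k| ≤ F) :
    ∀ t ∈ Icc s T, ∀ x : Euc d, ∀ k, |uP t x k| ≤ Real.exp (M * (t - s)) * F := by
  intro t ht x k
  have hJ : Icc s T ⊆ I := by
    rcases hI with ⟨a, rfl⟩ | rfl
    · exact fun r hr => le_trans hs hr.1
    · exact subset_univ _
  obtain ⟨φ, lam, -, hφ₂, hφpos, hφtend, hφA⟩ := hH.lyap _ hJ (isBounded_Icc s T)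
  have hφ : IsLyapunovFn Q b (CP c) (Ioc s T) φ lam :=
    ⟨hφ₂, hφpos, hφtend, fun t ht => hφA t (Ioc_subset_Icc_self ht)⟩
  have hQ : ∀ t ∈ Ioc s T, ∀ x k, (Matrix.of (Q k t x)).PosSemidef := fun t ht x k => by
    obtain ⟨μ, hμ, hμQ⟩ := hH.ellipt _ hJ (isBounded_Icc s T) k
    exact posSemidef_of_minEig_nonneg (hH.symm k t x)
      (hμ.le.trans (hμQ t (Ioc_subset_Icc_self ht) x))
  have hP : ∀ t ∈ Ioc s T, ∀ x k h, h ≠ k → 0 ≤ CP c t x k h := fun t _ x k h hhk => by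
    simp [CP, hhk.symm]
  have hM' : ∀ t ∈ Ioc s T, ∀ x k, ∑ h, CP c t x k h ≤ M := fun t ht =>
    hM t (Ioc_subset_Icc_self ht)
  obtain ⟨K, hK⟩ := hbd
  have hF₀ : 0 ≤ F := (abs_nonneg _).trans (hF x k)
  have hupper := huP.le_exp_mul (fun t ht x k => (le_abs_self _).trans (hK t ht x k)) hQ hP hM'
    hφ (fun x k => (le_abs_self _).trans (hF x k)) hF₀ t ht x k
  have hlower : -uP t x k ≤ Real.exp (M * (t - s)) * F := huP.neg.le_exp_mul
    (fun t ht x k => (neg_le_abs _).trans (hK t ht x k)) hQ hP hM' hφ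
    (fun x k => (neg_le_abs _).trans (hF x k)) hF₀ t ht x k
  exact abs_le.2 ⟨neg_le.1 hlower, hupper⟩

/-- Proposition 2.6(i): a priori bound for bounded classical solutions of the
Cauchy problem for `𝒜^P`.  Here `M` is any upper bound for the row sums of `C^P` on
`[s,T] × ℝ^d` and `F` any upper bound for `max_k sup |f_k|`. -/
theorem statement_1 {d m : ℕ} (hd : 1 ≤ d) (hm : 2 ≤ m)
    (I : Set ℝ) (hI : IsRightHalfline I)
    (Q : Fin m → ℝ → Euc d → Fin d → Fin d → ℝ)
    (b : Fin m → ℝ → Euc d → Fin d → ℝ)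
    (c : ℝ → Euc d → Fin m → Fin m → ℝ)
    (hH : Hyp I Q b c)
    (s T : ℝ) (hs : s ∈ I) (hT : T ∈ I) (hsT : s < T)
    (f : Euc d → Fin m → ℝ) (hf : IsBddContinuous f)
    (uP : ℝ → Euc d → Fin m → ℝ)
    (huP : ClassicalSolOn Q b (CP c) s T f uP)
    (hbd : ∃ K, ∀ t ∈ Icc s T, ∀ x : Euc d, ∀ k, |uP t x k| ≤ K)
    (M : ℝ) (hM : ∀ t ∈ Icc s T, ∀ x : Euc d, ∀ k, (∑ j, CP c t x k j) ≤ M)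
    (F : ℝ) (hF : ∀ (x : Euc d) k, |f x k| ≤ F) :
    ∀ t ∈ Icc s T, ∀ x : Euc d, ∀ k, |uP t x k| ≤ Real.exp (M * (t - s)) * F :=
  statement_1_general I hI Q b c hH s T hs f uP huP hbd M hM F hF
end
end

section
/- Let m ≥ 1 and let C = (c_{kh}) be a real m×m matrix. Define C^P = (c^P_{kh}) by c^P_{kk} = c_{kk} and c^P_{kh} = |c_{kh}| for h ≠ k. Assume that ⟨C^P y, y⟩ ≤ 0 for every y ∈ ℝ^m and that 0 is an eigenvalue of both C and C^P. Then every eigenvalue λ ∈ ℂ of C (viewed as a complex matrix) satisfies Re λ ≤ 0, and 0 is the unique eigenvalue of C on the imaginary axis; that is, if λ is an eigenvalue of C with Re λ = 0, then λ = 0. -/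
/-!
Let `v` be an eigenvector of `C` for `λ` and put `y k = ‖v k‖`. Then
`λ ‖v‖² = ∑ k h, c_kh conj(v_k) v_h`, and termwise `Re (c_kh conj(v_k) v_h) ≤ c^P_kh y_k y_h`
(with equality on the diagonal), so `Re λ ‖v‖² ≤ ⟨C^P y, y⟩ ≤ 0`.
If `Re λ = 0` every termwise inequality is an equality; off the diagonal this says that
`c_kh conj(v_k) v_h` has real part equal to its modulus, hence is real, so `Im λ ‖v‖² = 0`.
-/

open scoped ComplexOrder

theorem Complex.star_mul_ofReal_mul_self (c : ℝ) (z : ℂ) :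
    star z * (c * z) = ((c * ‖z‖ ^ 2 : ℝ) : ℂ) := by
  rw [Complex.ofReal_mul, Complex.ofReal_pow, ← Complex.mul_conj', Complex.star_def]
  ring

theorem Complex.norm_star_mul_ofReal_mul (c : ℝ) (z w : ℂ) :
    ‖star z * (c * w)‖ = |c| * ‖z‖ * ‖w‖ := by
  rw [norm_mul, norm_mul, norm_star, Complex.norm_real, Real.norm_eq_abs]
  ring

namespace Matrix

variable {ι : Type*}

theorem star_dotProduct_mulVec_eq_sum [Fintype ι] (A : Matrix ι ι ℂ) (v : ι → ℂ) :
    star v ⬝ᵥ (A *ᵥ v) = ∑ k, ∑ h, star (v k) * (A k h * v h) := by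
  simp only [dotProduct, mulVec, Pi.star_apply, Finset.mul_sum]

variable [DecidableEq ι]

def absOffDiag (C : Matrix ι ι ℝ) : Matrix ι ι ℝ :=
  of fun k h => if k = h then C k h else |C k h|

theorem re_star_mul_mul_le_absOffDiag (C : Matrix ι ι ℝ) (v : ι → ℂ) (k h : ι) :
    (star (v k) * (C k h * v h)).re ≤ C.absOffDiag k h * ‖v k‖ * ‖v h‖ := by
  by_cases hkh : k = h
  · subst hkh
    rw [Complex.star_mul_ofReal_mul_self, Complex.ofReal_re, absOffDiag, of_apply, if_pos rfl,
      sq, mul_assoc]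
  · calc (star (v k) * (C k h * v h)).re ≤ ‖star (v k) * (C k h * v h)‖ := Complex.re_le_norm _
      _ = C.absOffDiag k h * ‖v k‖ * ‖v h‖ := by
        rw [Complex.norm_star_mul_ofReal_mul, absOffDiag, of_apply, if_neg hkh]

theorem im_star_mul_mul_eq_zero_of_re_eq (C : Matrix ι ι ℝ) (v : ι → ℂ) (k h : ι)
    (heq : (star (v k) * (C k h * v h)).re = C.absOffDiag k h * ‖v k‖ * ‖v h‖) :
    (star (v k) * (C k h * v h)).im = 0 := by
  by_cases hkh : k = h
  · subst hkh
    rw [Complex.star_mul_ofReal_mul_self, Complex.ofReal_im]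
  · have hnorm : ‖star (v k) * (C k h * v h)‖ = C.absOffDiag k h * ‖v k‖ * ‖v h‖ := by
      rw [Complex.norm_star_mul_ofReal_mul, absOffDiag, of_apply, if_neg hkh]
    exact (Complex.nonneg_iff.mp (Complex.re_eq_norm.mp (heq.trans hnorm.symm))).2.symm

variable [Fintype ι]

theorem re_star_dotProduct_mulVec_le (C : Matrix ι ι ℝ) (v : ι → ℂ) :
    (star v ⬝ᵥ (C.map (↑) *ᵥ v)).re ≤ ∑ k, ∑ h, C.absOffDiag k h * ‖v k‖ * ‖v h‖ := by
  simp only [star_dotProduct_mulVec_eq_sum, map_apply, Complex.re_sum]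
  exact Finset.sum_le_sum fun k _ => Finset.sum_le_sum fun h _ =>
    re_star_mul_mul_le_absOffDiag C v k h

theorem im_star_dotProduct_mulVec_eq_zero_of_re_eq (C : Matrix ι ι ℝ) (v : ι → ℂ)
    (heq : (star v ⬝ᵥ (C.map (↑) *ᵥ v)).re = ∑ k, ∑ h, C.absOffDiag k h * ‖v k‖ * ‖v h‖) :
    (star v ⬝ᵥ (C.map (↑) *ᵥ v)).im = 0 := by
  simp only [star_dotProduct_mulVec_eq_sum, map_apply, Complex.re_sum, Complex.im_sum] at heq ⊢
  have hrow := (Finset.sum_eq_sum_iff_of_le fun k _ => Finset.sum_le_sum fun h _ =>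
    re_star_mul_mul_le_absOffDiag C v k h).mp heq
  refine Finset.sum_eq_zero fun k hk => Finset.sum_eq_zero fun h hh => ?_
  have hterm := (Finset.sum_eq_sum_iff_of_le fun h _ =>
    re_star_mul_mul_le_absOffDiag C v k h).mp (hrow k hk) h hh
  exact im_star_mul_mul_eq_zero_of_re_eq C v k h hterm

end Matrix

open Matrix in
theorem statement_15_general (m : ℕ)
    (C CP : Matrix (Fin m) (Fin m) ℝ)
    (hCP : ∀ k h, CP k h = if k = h then C k h else |C k h|)
    (hneg : ∀ y : Fin m → ℝ, (∑ k, ∑ h, CP k h * y k * y h) ≤ 0) :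
    ∀ lam : ℂ,
      (∃ v : Fin m → ℂ, v ≠ 0 ∧ (C.map (fun x : ℝ => (x : ℂ))).mulVec v = lam • v) →
      lam.re ≤ 0 ∧ (lam.re = 0 → lam = 0) := by
  rintro lam ⟨v, hv, hev⟩
  obtain rfl : CP = C.absOffDiag := Matrix.ext hCP
  obtain ⟨hs_pos, hs_im⟩ := Complex.pos_iff.mp (dotProduct_star_self_pos_iff.mpr hv)
  have hquad : star v ⬝ᵥ (C.map (↑) *ᵥ v) = lam * (star v ⬝ᵥ v) := by
    rw [hev, dotProduct_smul, smul_eq_mul]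
  have hre : (star v ⬝ᵥ (C.map (↑) *ᵥ v)).re = lam.re * (star v ⬝ᵥ v).re := by
    simp [hquad, Complex.mul_re, ← hs_im]
  have him : (star v ⬝ᵥ (C.map (↑) *ᵥ v)).im = lam.im * (star v ⬝ᵥ v).re := by
    simp [hquad, Complex.mul_im, ← hs_im]
  have hle := (re_star_dotProduct_mulVec_le C v).trans (hneg fun k => ‖v k‖)
  refine ⟨nonpos_of_mul_nonpos_left (hre ▸ hle) hs_pos, fun hre0 => Complex.ext hre0 ?_⟩
  have hzero : (star v ⬝ᵥ (C.map (↑) *ᵥ v)).re = 0 := by rw [hre, hre0, zero_mul]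
  have heq := le_antisymm (re_star_dotProduct_mulVec_le C v)
    (hzero ▸ hneg fun k => ‖v k‖)
  have him0 := im_star_dotProduct_mulVec_eq_zero_of_re_eq C v heq
  rw [him] at him0
  exact (mul_eq_zero.mp him0).resolve_right hs_pos.ne'

/-- Lemma 5.6: if `⟨C^P y, y⟩ ≤ 0` on `ℝ^m` and `0` is an eigenvalue of
both `C` and `C^P`, then the spectrum of `C` lies in the closed left half-plane and `0`
is its unique eigenvalue on the imaginary axis. -/
theorem statement_15 (m : ℕ) (hm : 1 ≤ m)
    (C CP : Matrix (Fin m) (Fin m) ℝ)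
    (hCP : ∀ k h, CP k h = if k = h then C k h else |C k h|)
    (hneg : ∀ y : Fin m → ℝ, (∑ k, ∑ h, CP k h * y k * y h) ≤ 0)
    (h0C : ∃ v : Fin m → ℝ, v ≠ 0 ∧ C.mulVec v = 0)
    (h0CP : ∃ v : Fin m → ℝ, v ≠ 0 ∧ CP.mulVec v = 0) :
    ∀ lam : ℂ,
      (∃ v : Fin m → ℂ, v ≠ 0 ∧ (C.map (fun x : ℝ => (x : ℂ))).mulVec v = lam • v) →
      lam.re ≤ 0 ∧ (lam.re = 0 → lam = 0) :=
  statement_15_general m C CP hCP hneg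
end
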